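/- arXiv:2111.14965 — 2 statements merged into one kernel-verified Lean document; each statement's English description precedes it below -/
import Mathlib

section
/- Let n ≥ 2, let d ≥ 1, let S_1,…,S_d ⊆ {1,…,n} be subsets with |S_j| ≥ 2, and let R be a weight datum of length n such that ∑_{i∈S_j} r_i = 1 for every j = 1,…,d, while ∑_{i∈S} r_i ≠ 1 for every S ⊆ {1,…,n} with |S| ≥ 2 and S ∉ {S_1,…,S_d}. Then there exists a weight datum A of length n with a_i ≤ r_i for every i such that for every S ⊆ {1,…,n} with |S| ≥ 2: ∑_{i∈S} a_i < 1 if and only if ∑_{i∈S} r_i ≤ 1 (in particular A is off the walls). -/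
open Finset

/-- A weight datum of length `n`: all coordinates in `(0, 1]`. -/
def IsWeightDatum {n : ℕ} (A : Fin n → ℝ) : Prop :=
  ∀ i, 0 < A i ∧ A i ≤ 1

/-- A weight datum is off the walls if no subset sum over a set of size `≥ 2` equals 1. -/
def OffWalls {n : ℕ} (A : Fin n → ℝ) : Prop :=
  ∀ S : Finset (Fin n), 2 ≤ S.card → ∑ i ∈ S, A i ≠ 1

/-- `Ch_A ≤ Ch_B`. -/
def ChLE {n : ℕ} (A B : Fin n → ℝ) : Prop :=
  ∀ S : Finset (Fin n), 2 ≤ S.card → 1 < ∑ i ∈ S, A i → 1 < ∑ i ∈ S, B i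

/-- `A` and `B` lie in the same fine chamber. -/
def SameChamber {n : ℕ} (A B : Fin n → ℝ) : Prop :=
  ∀ S : Finset (Fin n), 2 ≤ S.card → (1 < ∑ i ∈ S, A i ↔ 1 < ∑ i ∈ S, B i)

theorem stmt1 {n d : ℕ} (hn : 2 ≤ n) (hd : 1 ≤ d)
    (S : Fin d → Finset (Fin n)) (hScard : ∀ j, 2 ≤ (S j).card)
    (R : Fin n → ℝ) (hR : IsWeightDatum R)
    (hwall : ∀ j, ∑ i ∈ S j, R i = 1)
    (hoff : ∀ T : Finset (Fin n), 2 ≤ T.card → (∀ j, T ≠ S j) →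
      ∑ i ∈ T, R i ≠ 1) :
    ∃ A : Fin n → ℝ, IsWeightDatum A ∧ (∀ i, A i ≤ R i) ∧
      ∀ T : Finset (Fin n), 2 ≤ T.card →
        (∑ i ∈ T, A i < 1 ↔ ∑ i ∈ T, R i ≤ 1) := by
  classical
  -- It suffices to find a scaling constant c ∈ (0,1) with c * s > 1
  -- whenever s is a subset sum of R exceeding 1.
  obtain ⟨c, hc0, hc1, hc⟩ : ∃ c : ℝ, 0 < c ∧ c < 1 ∧
      ∀ T : Finset (Fin n), 1 < ∑ i ∈ T, R i → 1 < c * ∑ i ∈ T, R i := by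
    set F := (Finset.univ : Finset (Finset (Fin n))).filter
      (fun T => 1 < ∑ i ∈ T, R i) with hF
    by_cases hFe : F.Nonempty
    · set m := F.inf' hFe (fun T => ∑ i ∈ T, R i) with hm
      have hm1 : 1 < m := by
        rw [hm, Finset.lt_inf'_iff]
        intro T hT
        exact (Finset.mem_filter.mp hT).2
      refine ⟨(m + 1) / (2 * m), by positivity, ?_, ?_⟩
      · rw [div_lt_one (by linarith)]; linarith
      · intro T hT
        have hmem : T ∈ F := Finset.mem_filter.mpr ⟨Finset.mem_univ T, hT⟩
        have hle : m ≤ ∑ i ∈ T, R i := Finset.inf'_le _ hmem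
        have h1 : (1:ℝ) < (m + 1) / (2 * m) * m := by
          rw [div_mul_eq_mul_div, lt_div_iff₀ (by nlinarith)]
          nlinarith
        calc (1:ℝ) < (m + 1) / (2 * m) * m := h1
          _ ≤ (m + 1) / (2 * m) * ∑ i ∈ T, R i := by
              apply mul_le_mul_of_nonneg_left hle; positivity
    · refine ⟨1/2, by norm_num, by norm_num, ?_⟩
      intro T hT
      exact absurd ⟨T, Finset.mem_filter.mpr ⟨Finset.mem_univ T, hT⟩⟩ hFe
  refine ⟨fun i => c * R i, fun i => ⟨mul_pos hc0 (hR i).1, ?_⟩, fun i => ?_, ?_⟩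
  · calc c * R i ≤ 1 * R i := by
          apply mul_le_mul_of_nonneg_right hc1.le (hR i).1.le
      _ = R i := one_mul _
      _ ≤ 1 := (hR i).2
  · calc c * R i ≤ 1 * R i := by
          apply mul_le_mul_of_nonneg_right hc1.le (hR i).1.le
      _ = R i := one_mul _
  · intro T hT
    rw [← Finset.mul_sum]
    constructor
    · intro h
      by_contra hgt
      push_neg at hgt
      exact absurd (hc T hgt) (by linarith)
    · intro h
      have hnn : 0 ≤ ∑ i ∈ T, R i := Finset.sum_nonneg fun i _ => (hR i).1.le
      calc c * ∑ i ∈ T, R i ≤ c * 1 := by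
            apply mul_le_mul_of_nonneg_left h hc0.le
        _ < 1 := by linarith
end

section
/- For n = 8, define the predicates on subsets S ⊆ {1,…,8} with |S| ≥ 2: P₁(S) := (S = {1,j} for some 2 ≤ j ≤ 7) or |S| ≥ 3; P₂(S) := (|S| = 2 and S ⊆ {1,2,3,4}) or (|S| ≥ 3 and |S ∩ {1,2,3,4}| ≥ 2). Then there is no permutation σ of {1,…,8} such that for every S ⊆ {1,…,8} with |S| ≥ 2 one has P₁(σ(S)) ⟺ P₂(S); that is, the two chambers lie in different orbits of the S₈-action on fine chambers. -/
open Finset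

/-- Pattern of the first chamber (`n = 8`): `S = {1, j}` for some `2 ≤ j ≤ 7`
(in `Fin 8` indexing: `S = {0, j}` with `1 ≤ j ≤ 6`), or `|S| ≥ 3`. -/
def P1 (S : Finset (Fin 8)) : Prop :=
  (∃ j : Fin 8, 1 ≤ (j : ℕ) ∧ (j : ℕ) ≤ 6 ∧ S = {0, j}) ∨ 3 ≤ S.card

/-- Pattern of the second chamber (`n = 8`): `|S| = 2` and `S ⊆ {1,2,3,4}`
(in `Fin 8` indexing: `S ⊆ {0,1,2,3}`), or `|S| ≥ 3` and `|S ∩ {1,2,3,4}| ≥ 2`. -/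
def P2 (S : Finset (Fin 8)) : Prop :=
  (S.card = 2 ∧ S ⊆ {0, 1, 2, 3}) ∨
  (3 ≤ S.card ∧ 2 ≤ (S ∩ ({0, 1, 2, 3} : Finset (Fin 8))).card)

theorem stmt18 :
    ¬ ∃ σ : Equiv.Perm (Fin 8),
        ∀ S : Finset (Fin 8), 2 ≤ S.card →
          (P1 (S.image σ) ↔ P2 S) := by
  rintro ⟨σ, h⟩
  have key : ∀ S : Finset (Fin 8), S.card = 2 → P2 S → (0 : Fin 8) ∈ S.image σ := by
    intro S hS hP2
    have h1 := (h S (by omega)).2 hP2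
    rcases h1 with ⟨j, _, _, hEq⟩ | h3
    · rw [hEq]; simp
    · rw [Finset.card_image_of_injective S σ.injective, hS] at h3; omega
  have hA := key {0, 1} (by decide) (by left; constructor <;> decide)
  have hB := key {2, 3} (by decide) (by left; constructor <;> decide)
  simp only [Finset.mem_image] at hA hB
  obtain ⟨a, ha, ha0⟩ := hA
  obtain ⟨b, hb, hb0⟩ := hB
  have : a = b := σ.injective (ha0.trans hb0.symm)
  subst this
  fin_cases ha <;> simp_all
end
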